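/- Let n ≥ 4 and let A ∈ PSC_n^{1,1} (primitive symmetric companion matrix with a_{n,1} > 0 and a_{n,n} > 0). Define V₁ = {i ∈ [1,n−1] : a_{n,i} = 0} and m(V₁) as the maximum length of a run of consecutive integers in V₁. Then exp(A) = 2(⌊(m(V₁)+1)/2⌋ + 1). -/

import Mathlib

def IsPrimitive {n : ℕ} (A : Matrix (Fin n) (Fin n) ℝ) : Prop :=
  (∀ i j, 0 ≤ A i j) ∧ ∃ k : ℕ, 0 < k ∧ ∀ i j, 0 < (A ^ k) i j

def ExpIs {n : ℕ} (A : Matrix (Fin n) (Fin n) ℝ) (e : ℕ) : Prop :=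
  IsLeast {k : ℕ | 0 < k ∧ ∀ i j, 0 < (A ^ k) i j} e

/-- A `(0,1)` companion matrix: superdiagonal entries `1` and all other entries
`0` in the first `n-1` rows; last-row entries in `{0,1}`. -/
def IsCompanion {n : ℕ} (C : Matrix (Fin n) (Fin n) ℝ) : Prop :=
  ∀ i j : Fin n,
    if (i : ℕ) + 1 < n then (C i j = if (j : ℕ) = (i : ℕ) + 1 then 1 else 0)
    else (C i j = 0 ∨ C i j = 1)

/-- The set `C_n^{α,ε}` of symmetric companion matrices `C + Cᵀ` with
`c_{n,1} = α` and `c_{n,n} = ε`. -/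
def companionClass (n : ℕ) (hn : 0 < n) (α ε : ℝ) :
    Set (Matrix (Fin n) (Fin n) ℝ) :=
  {A | ∃ C : Matrix (Fin n) (Fin n) ℝ, IsCompanion C ∧
    C ⟨n - 1, by omega⟩ ⟨0, hn⟩ = α ∧ C ⟨n - 1, by omega⟩ ⟨n - 1, by omega⟩ = ε ∧
    A = C + C.transpose}

/-- `mRun S` : the maximum length of a run of consecutive integers contained in
`S` (`0` for the empty set). -/
noncomputable def mRun (S : Set ℕ) : ℕ := sSup {L : ℕ | ∃ a : ℕ, ∀ t, t < L → a + t ∈ S}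

/-- The exponent set of a family of matrices. -/
def expSet {n : ℕ} (X : Set (Matrix (Fin n) (Fin n) ℝ)) : Set ℕ :=
  {e | ∃ A ∈ X, IsPrimitive A ∧ ExpIs A e}

/-
Write `A = C + Cᵀ` and view it as a graph on `0, …, n-1`: the superdiagonal makes
`0 — 1 — ⋯ — (n-2) — (n-1)` a path, the last row joins `n-1` to its support `N ∋ 0, n-2`, and the
only loop is at `n-1`. The distance of a path vertex `v` to `n-1` is `1 + d(v, N)`, whose maximum
is `⌈m(V₁)/2⌉ + 1 =: r`. Any two vertices are joined by walks of every length `≥ 2r` through the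
loop, so `exp(A) ≤ 2r`. Conversely, walks avoiding `n-1` stay on the bipartite path; so from a
vertex `i` at distance `r` there is no closed walk of odd length `< 2r`, and no walk of even length
`< 2r` to a path neighbour of `i`.
-/

namespace Matrix

variable {ι R : Type*} [Fintype ι] [CommSemiring R] [PartialOrder R]
  [IsStrictOrderedRing R] {A B : Matrix ι ι R}

theorem mul_apply_pos_iff_of_nonneg (hA : ∀ i j, 0 ≤ A i j) (hB : ∀ i j, 0 ≤ B i j)
    {i j : ι} : 0 < (A * B) i j ↔ ∃ l, 0 < A i l ∧ 0 < B l j := by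
  have hAB : ∀ l ∈ Finset.univ, 0 ≤ A i l * B l j := fun l _ ↦ mul_nonneg (hA i l) (hB l j)
  rw [mul_apply, Finset.sum_pos_iff_of_nonneg hAB]
  refine ⟨fun ⟨l, _, hl⟩ ↦ ⟨l, ?_, ?_⟩, fun ⟨l, hAl, hBl⟩ ↦ ⟨l, Finset.mem_univ l, mul_pos hAl hBl⟩⟩
  · exact (hA i l).lt_of_ne fun h ↦ by simp [← h] at hl
  · exact (hB l j).lt_of_ne fun h ↦ by simp [← h] at hl

variable [DecidableEq ι]

theorem pow_succ_apply_pos_iff (hA : ∀ i j, 0 ≤ A i j) {k : ℕ} {i j : ι} :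
    0 < (A ^ (k + 1)) i j ↔ ∃ l, 0 < (A ^ k) i l ∧ 0 < A l j := by
  rw [pow_succ, mul_apply_pos_iff_of_nonneg (pow_apply_nonneg hA k) hA]

theorem pow_add_apply_pos (hA : ∀ i j, 0 ≤ A i j) {a b : ℕ} {i l j : ι}
    (h₁ : 0 < (A ^ a) i l) (h₂ : 0 < (A ^ b) l j) : 0 < (A ^ (a + b)) i j := by
  rw [pow_add]
  exact (mul_apply_pos_iff_of_nonneg (pow_apply_nonneg hA a) (pow_apply_nonneg hA b)).2
    ⟨l, h₁, h₂⟩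

theorem pow_apply_pos_of_diag_pos (hA : ∀ i j, 0 ≤ A i j) {i : ι} (hi : 0 < A i i) (k : ℕ) :
    0 < (A ^ k) i i := by
  induction k with
  | zero => simp
  | succ k ih => exact (pow_succ_apply_pos_iff hA).2 ⟨i, ih, hi⟩

section RootedDepth

variable {ℓ : ι} {g : ι → ℕ} {col : ι → ZMod 2}
  (hA : ∀ i j, 0 ≤ A i j) (hsymm : A.IsSymm)
  (hg0 : ∀ v, g v = 0 ↔ v = ℓ) (hstep : ∀ u v, 0 < A u v → g v ≤ g u + 1)
  (hdesc : ∀ v, v ≠ ℓ → ∃ w, 0 < A v w ∧ g w + 1 = g v)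
  (hcol : ∀ u v, 0 < A u v → u ≠ ℓ → v ≠ ℓ → col v = col u + 1)

include hA hg0 hdesc in
theorem pow_depth_apply_root_pos (v : ι) : 0 < (A ^ g v) v ℓ := by
  induction h : g v generalizing v with
  | zero => simp [(hg0 v).1 h]
  | succ d ih =>
    obtain ⟨w, hvw, hw⟩ := hdesc v fun hv ↦ by simp [(hg0 v).2 hv] at h
    rw [pow_succ']
    exact (mul_apply_pos_iff_of_nonneg hA (pow_apply_nonneg hA d)).2 ⟨w, hvw, ih w (by omega)⟩

include hA hsymm hg0 hdesc in
theorem pow_apply_pos_of_depth_add_le (hloop : 0 < A ℓ ℓ) {k : ℕ} {i j : ι}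
    (h : g i + g j ≤ k) : 0 < (A ^ k) i j := by
  have hi := pow_depth_apply_root_pos hA hg0 hdesc i
  have hj : 0 < (A ^ g j) ℓ j :=
    (hsymm.pow _).apply ℓ j ▸ pow_depth_apply_root_pos hA hg0 hdesc j
  have hmid := pow_apply_pos_of_diag_pos hA hloop (k - g i - g j)
  rw [show k = g i + (k - g i - g j) + g j by omega]
  exact pow_add_apply_pos hA (pow_add_apply_pos hA hi hmid) hj

include hA hsymm hstep in
theorem depth_le_of_pow_apply_pos {k : ℕ} {i j : ι} (h : 0 < (A ^ k) i j) : g i ≤ g j + k := by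
  induction k generalizing j with
  | zero =>
    obtain rfl : i = j := by by_contra hij; simp [one_apply_ne hij] at h
    simp
  | succ k ih =>
    obtain ⟨l, hil, hlj⟩ := (pow_succ_apply_pos_iff hA).1 h
    have := hstep j l (hsymm.apply l j ▸ hlj)
    have := ih hil
    omega

include hA hsymm hg0 hstep hcol in
theorem depth_add_le_or_col_eq_of_pow_apply_pos {k : ℕ} {i j : ι} (hi : i ≠ ℓ)
    (h : 0 < (A ^ k) i j) :
    g i + g j ≤ k ∨ (j ≠ ℓ ∧ col j = col i + k) := by
  induction k generalizing j with
  | zero =>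
    obtain rfl : i = j := by by_contra hij; simp [one_apply_ne hij] at h
    simp [hi]
  | succ k ih =>
    obtain ⟨l, hil, hlj⟩ := (pow_succ_apply_pos_iff hA).1 h
    rcases ih hil with hle | ⟨hl, hcl⟩
    · have := hstep l j hlj
      omega
    · by_cases hj : j = ℓ
      · have := depth_le_of_pow_apply_pos hA hsymm hstep h
        simp [hj, (hg0 ℓ).2 rfl] at this ⊢
        omega
      · right
        rw [hcol l j hlj hl hj, hcl]
        exact ⟨hj, by push_cast; ring⟩

include hA hsymm hg0 hstep hdesc hcol in
theorem isLeast_pow_pos_of_depth (hloop : 0 < A ℓ ℓ) {r : ℕ} (hr : ∀ v, g v ≤ r) {i w : ι}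
    (hi : g i = r) (hiw : 0 < A i w) (hw : w ≠ ℓ) :
    IsLeast {k : ℕ | 0 < k ∧ ∀ i j, 0 < (A ^ k) i j} (2 * r) := by
  have hiℓ : i ≠ ℓ := by
    rintro rfl
    exact hw ((hg0 w).1 (by have := hr w; have := (hg0 i).2 rfl; omega))
  have hr0 : r ≠ 0 := fun h ↦ hiℓ ((hg0 i).1 (hi.trans h))
  refine ⟨⟨by omega, fun u v ↦ pow_apply_pos_of_depth_add_le hA hsymm hg0 hdesc hloop
    (by linarith [hr u, hr v])⟩, ?_⟩
  rintro k ⟨-, hk⟩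
  by_contra! hlt
  have hwi := hstep w i (hsymm.apply w i ▸ hiw)
  have heven : Even k := by
    rcases depth_add_le_or_col_eq_of_pow_apply_pos hA hsymm hg0 hstep hcol hiℓ (hk i i) with
      h | ⟨-, h⟩
    · omega
    · rwa [left_eq_add, ZMod.natCast_eq_zero_iff_even] at h
  rcases depth_add_le_or_col_eq_of_pow_apply_pos hA hsymm hg0 hstep hcol hiℓ (hk i w) with
      h | ⟨-, h⟩
  · obtain ⟨m, rfl⟩ := heven
    omega
  · rw [hcol i w hiw hiℓ hw, heven.natCast_zmod_two, add_zero, add_eq_left] at h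
    exact one_ne_zero h

end RootedDepth

end Matrix

theorem bddAbove_runLengths {S : Set ℕ} {p : ℕ} (hS : ∀ i ∈ S, i ≤ p) :
    BddAbove {L : ℕ | ∃ a : ℕ, ∀ t, t < L → a + t ∈ S} := by
  refine ⟨p + 1, fun L ⟨a, ha⟩ ↦ ?_⟩
  rcases Nat.eq_zero_or_pos L with h | h
  · omega
  · have := hS _ (ha (L - 1) (by omega))
    omega

theorem le_mRun {S : Set ℕ} {p : ℕ} (hS : ∀ i ∈ S, i ≤ p) {a L : ℕ}
    (h : ∀ t, t < L → a + t ∈ S) : L ≤ mRun S :=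
  le_csSup (bddAbove_runLengths hS) (⟨a, h⟩ : ∃ a : ℕ, ∀ t, t < L → a + t ∈ S)

theorem exists_run_mRun {S : Set ℕ} {p : ℕ} (hS : ∀ i ∈ S, i ≤ p) :
    ∃ a : ℕ, ∀ t, t < mRun S → a + t ∈ S :=
  Nat.sSup_mem (s := {L : ℕ | ∃ a : ℕ, ∀ t, t < L → a + t ∈ S}) ⟨0, 0, by simp⟩
    (bddAbove_runLengths hS)

namespace Nat

noncomputable def infDist (v : ℕ) (N : Set ℕ) : ℕ := sInf (Nat.dist v '' N)

variable {N : Set ℕ} {u v j : ℕ}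

theorem infDist_le_dist (hj : j ∈ N) : infDist v N ≤ Nat.dist v j :=
  Nat.sInf_le ⟨j, hj, rfl⟩

theorem exists_dist_eq_infDist (hN : N.Nonempty) : ∃ j ∈ N, Nat.dist v j = infDist v N :=
  Nat.sInf_mem (hN.image _)

theorem infDist_eq_zero_iff (hN : N.Nonempty) : infDist v N = 0 ↔ v ∈ N := by
  refine ⟨fun h ↦ ?_, fun hv ↦ Nat.le_zero.1 ((infDist_le_dist hv).trans (dist_self v).le)⟩
  obtain ⟨j, hj, hvj⟩ := exists_dist_eq_infDist (v := v) hN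
  rwa [eq_of_dist_eq_zero (hvj.trans h)]

theorem infDist_le_infDist_add_dist : infDist u N ≤ infDist v N + Nat.dist u v := by
  rcases N.eq_empty_or_nonempty with rfl | hN
  · simp [infDist]
  obtain ⟨j, hj, hvj⟩ := exists_dist_eq_infDist (v := v) hN
  have := infDist_le_dist (v := u) hj
  unfold Nat.dist at *
  omega

theorem exists_infDist_add_one_eq {q : ℕ} (hN : ∀ j ∈ N, j < q) (hv : v < q)
    (h : 0 < infDist v N) : ∃ u < q, Nat.dist u v = 1 ∧ infDist u N + 1 = infDist v N := by
  have hNne : N.Nonempty := Set.nonempty_iff_ne_empty.2 fun hN ↦ by simp [infDist, hN] at h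
  obtain ⟨j, hj, hvj⟩ := exists_dist_eq_infDist (v := v) hNne
  have hjq := hN j hj
  have step : ∀ u, Nat.dist u v = 1 → Nat.dist u j + 1 = Nat.dist v j →
      infDist u N + 1 = infDist v N := fun u huv huj ↦ by
    have := infDist_le_dist (v := u) hj
    have := infDist_le_infDist_add_dist (N := N) (u := v) (v := u)
    rw [dist_comm] at this
    omega
  unfold Nat.dist at hvj
  rcases lt_or_ge j v with hjv | hvj'
  · exact ⟨v - 1, by omega, by unfold Nat.dist; omega, step _ (by unfold Nat.dist; omega)
      (by unfold Nat.dist; omega)⟩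
  · exact ⟨v + 1, by omega, by unfold Nat.dist; omega, step _ (by unfold Nat.dist; omega)
      (by unfold Nat.dist; omega)⟩

theorem infDist_le_mRun {q : ℕ} (h0 : 0 ∈ N) (hq : q - 1 ∈ N) (hv : v < q) :
    infDist v N ≤ (mRun {i | i < q ∧ i ∉ N} + 1) / 2 := by
  set c := (mRun {i | i < q ∧ i ∉ N} + 1) / 2
  by_contra! hlt
  have hfar : ∀ j ∈ N, c < Nat.dist v j := fun j hj ↦ hlt.trans_le (infDist_le_dist hj)
  have h0' := hfar 0 h0
  have hq' := hfar (q - 1) hq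
  unfold Nat.dist at h0' hq'
  have := le_mRun (S := {i | i < q ∧ i ∉ N}) (p := q) (a := v - c) (L := 2 * c + 1)
    (fun i hi ↦ hi.1.le)
    fun t ht ↦ ⟨by omega, fun hN ↦ by have := hfar _ hN; unfold Nat.dist at this; omega⟩
  omega

theorem exists_mRun_le_infDist {q : ℕ} (hq : 0 < q) (hN : N.Nonempty) :
    ∃ v < q, (mRun {i | i < q ∧ i ∉ N} + 1) / 2 ≤ infDist v N := by
  set m := mRun {i | i < q ∧ i ∉ N}
  obtain ⟨a, ha⟩ := exists_run_mRun (S := {i | i < q ∧ i ∉ N}) (p := q) fun i hi ↦ hi.1.le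
  rcases Nat.eq_zero_or_pos m with hm | hm
  · exact ⟨0, hq, by omega⟩
  have hend := (ha (m - 1) (by omega)).1
  refine ⟨a + (m + 1) / 2 - 1, by omega, ?_⟩
  obtain ⟨j, hj, hvj⟩ := exists_dist_eq_infDist (v := a + (m + 1) / 2 - 1) hN
  have hout : j < a ∨ a + m ≤ j := by
    by_contra! hin
    exact (ha (j - a) (by omega)).2 (by rwa [Nat.add_sub_cancel' hin.1])
  rw [← hvj]
  unfold Nat.dist
  omega

end Nat

theorem cast_zmod_two_eq_add_one_of_dist_eq_one {u v : ℕ} (h : Nat.dist u v = 1) :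
    (v : ZMod 2) = u + 1 := by
  unfold Nat.dist at h
  rcases (by omega : v = u + 1 ∨ u = v + 1) with rfl | rfl
  · push_cast; rfl
  · push_cast; ring_nf; reduce_mod_char

section CompanionGraph

open Matrix

variable {n : ℕ} {C : Matrix (Fin n) (Fin n) ℝ}

namespace IsCompanion

theorem apply_of_succ_lt (hC : IsCompanion C) {i : Fin n} (hi : (i : ℕ) + 1 < n) (j : Fin n) :
    C i j = if (j : ℕ) = i + 1 then 1 else 0 := by
  simpa [hi] using hC i j

theorem apply_eq_zero_or_eq_one (hC : IsCompanion C) (i j : Fin n) : C i j = 0 ∨ C i j = 1 := by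
  have h := hC i j
  split_ifs at h <;> simp_all

theorem nonneg (hC : IsCompanion C) (i j : Fin n) : 0 ≤ C i j := by
  rcases hC.apply_eq_zero_or_eq_one i j with h | h <;> simp [h]

theorem add_transpose_nonneg (hC : IsCompanion C) (i j : Fin n) : 0 ≤ (C + Cᵀ) i j :=
  add_nonneg (hC.nonneg i j) (hC.nonneg j i)

theorem add_transpose_apply_pos_of_succ (hC : IsCompanion C) {i j : Fin n}
    (h : (j : ℕ) = i + 1) : 0 < (C + Cᵀ) i j := by
  have hCij : C i j = 1 := by rw [hC.apply_of_succ_lt (by omega), if_pos h]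
  simpa [hCij] using add_pos_of_pos_of_nonneg one_pos (hC.nonneg j i)

theorem add_transpose_apply_pos_iff (hC : IsCompanion C) {i j : Fin n} (hi : (i : ℕ) + 1 < n)
    (hj : (j : ℕ) + 1 < n) : 0 < (C + Cᵀ) i j ↔ Nat.dist i j = 1 := by
  simp only [Matrix.add_apply, transpose_apply, hC.apply_of_succ_lt hi, hC.apply_of_succ_lt hj]
  unfold Nat.dist
  split_ifs <;> norm_num <;> omega

end IsCompanion

def pathNeighbors (A : Matrix (Fin n) (Fin n) ℝ) (ℓ : Fin n) : Set ℕ :=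
  {i | ∃ h : i < n, i + 1 < n ∧ 0 < A ℓ ⟨i, h⟩}

noncomputable def pathDepth (N : Set ℕ) (ℓ v : Fin n) : ℕ :=
  if v = ℓ then 0 else Nat.infDist v N + 1

theorem pathDepth_eq_zero_iff {N : Set ℕ} {ℓ v : Fin n} : pathDepth N ℓ v = 0 ↔ v = ℓ := by
  by_cases hv : v = ℓ <;> simp [pathDepth, hv]

section PathDepth

variable {ℓ : Fin n} (hℓ : (ℓ : ℕ) + 1 = n)

include hℓ in
theorem val_add_one_lt_of_ne {v : Fin n} (hv : v ≠ ℓ) : (v : ℕ) + 1 < n := by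
  have := Fin.val_ne_of_ne hv
  omega

include hℓ in
theorem mk_ne_of_add_one_lt {v : ℕ} (hv : v + 1 < n) : (⟨v, by omega⟩ : Fin n) ≠ ℓ :=
  fun h ↦ by rw [Fin.ext_iff] at h; simp at h; omega

include hℓ in
theorem mem_pathNeighbors_iff {A : Matrix (Fin n) (Fin n) ℝ} {v : Fin n} (hv : v ≠ ℓ) :
    (v : ℕ) ∈ pathNeighbors A ℓ ↔ 0 < A ℓ v :=
  ⟨fun ⟨_, _, h⟩ ↦ h, fun h ↦ ⟨v.isLt, val_add_one_lt_of_ne hℓ hv, h⟩⟩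

theorem lt_of_mem_pathNeighbors {A : Matrix (Fin n) (Fin n) ℝ} {j : ℕ}
    (hj : j ∈ pathNeighbors A ℓ) : j < n - 1 := by
  obtain ⟨_, hj, _⟩ := hj
  omega

theorem setOf_apply_eq_zero_eq_notMem_pathNeighbors {A : Matrix (Fin n) (Fin n) ℝ}
    (hA : ∀ j, 0 ≤ A ℓ j) :
    {i : ℕ | ∃ h : i < n, i + 1 < n ∧ A ℓ ⟨i, h⟩ = 0} =
      {i | i < n - 1 ∧ i ∉ pathNeighbors A ℓ} := by
  ext i
  simp only [pathNeighbors, Set.mem_ofPred_eq, not_exists, not_and]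
  refine ⟨fun ⟨hi, hi', h⟩ ↦ ⟨by omega, fun _ _ ↦ h.not_gt⟩,
    fun ⟨hi, h⟩ ↦ ⟨by omega, by omega, ?_⟩⟩
  exact le_antisymm (not_lt.1 (h (by omega) (by omega))) (hA _)

variable (hC : IsCompanion C)

include hC hℓ in
theorem sub_two_mem_pathNeighbors (hn : 2 ≤ n) : n - 2 ∈ pathNeighbors (C + Cᵀ) ℓ :=
  ⟨by omega, by omega, (isSymm_add_transpose_self C).apply _ _ ▸
    hC.add_transpose_apply_pos_of_succ (by simp; omega)⟩

include hC hℓ in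
theorem pathDepth_le_pathDepth_add_one {u v : Fin n} (huv : 0 < (C + Cᵀ) u v) :
    pathDepth (pathNeighbors (C + Cᵀ) ℓ) ℓ v ≤ pathDepth (pathNeighbors (C + Cᵀ) ℓ) ℓ u + 1 := by
  by_cases hv : v = ℓ
  · simp [pathDepth, hv]
  by_cases hu : u = ℓ
  · subst hu
    have hvN := (mem_pathNeighbors_iff hℓ hv).2 huv
    simp [pathDepth, hv, (Nat.infDist_eq_zero_iff ⟨_, hvN⟩).2 hvN]
  have := (hC.add_transpose_apply_pos_iff (val_add_one_lt_of_ne hℓ hu)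
    (val_add_one_lt_of_ne hℓ hv)).1 huv
  have := Nat.infDist_le_infDist_add_dist (N := pathNeighbors (C + Cᵀ) ℓ) (u := v) (v := u)
  rw [Nat.dist_comm] at this
  simp only [pathDepth, if_neg hu, if_neg hv]
  omega

include hC hℓ in
theorem exists_pathDepth_add_one_eq {v : Fin n} (hv : v ≠ ℓ) : ∃ w, 0 < (C + Cᵀ) v w ∧
    pathDepth (pathNeighbors (C + Cᵀ) ℓ) ℓ w + 1 = pathDepth (pathNeighbors (C + Cᵀ) ℓ) ℓ v := by
  set N := pathNeighbors (C + Cᵀ) ℓ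
  have hvn := val_add_one_lt_of_ne hℓ hv
  have hN : N.Nonempty := ⟨_, sub_two_mem_pathNeighbors hℓ hC (by omega)⟩
  by_cases hvN : (v : ℕ) ∈ N
  · refine ⟨ℓ, (isSymm_add_transpose_self C).apply _ _ ▸ (mem_pathNeighbors_iff hℓ hv).1 hvN, ?_⟩
    simp [pathDepth, hv, (Nat.infDist_eq_zero_iff hN).2 hvN]
  obtain ⟨u, hu, huv, hdu⟩ := Nat.exists_infDist_add_one_eq (q := n - 1)
    (fun j hj ↦ lt_of_mem_pathNeighbors hj) (by omega)
    (Nat.pos_of_ne_zero fun h ↦ hvN ((Nat.infDist_eq_zero_iff hN).1 h))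
  refine ⟨⟨u, by omega⟩, (hC.add_transpose_apply_pos_iff hvn (by simp; omega)).2 ?_, ?_⟩
  · rwa [Nat.dist_comm]
  · simpa [pathDepth, hv, mk_ne_of_add_one_lt hℓ (by omega : u + 1 < n)] using hdu

include hC hℓ in
theorem cast_val_eq_add_one {u v : Fin n} (huv : 0 < (C + Cᵀ) u v) (hu : u ≠ ℓ) (hv : v ≠ ℓ) :
    ((v : ℕ) : ZMod 2) = ((u : ℕ) : ZMod 2) + 1 :=
  cast_zmod_two_eq_add_one_of_dist_eq_one ((hC.add_transpose_apply_pos_iff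
    (val_add_one_lt_of_ne hℓ hu) (val_add_one_lt_of_ne hℓ hv)).1 huv)

include hC hℓ in
theorem pathDepth_le (h0 : 0 ∈ pathNeighbors (C + Cᵀ) ℓ) (v : Fin n) :
    pathDepth (pathNeighbors (C + Cᵀ) ℓ) ℓ v ≤
      (mRun {i | i < n - 1 ∧ i ∉ pathNeighbors (C + Cᵀ) ℓ} + 1) / 2 + 1 := by
  by_cases hv : v = ℓ
  · simp [pathDepth, hv]
  have hvn := val_add_one_lt_of_ne hℓ hv
  have hq : n - 1 - 1 ∈ pathNeighbors (C + Cᵀ) ℓ := sub_two_mem_pathNeighbors hℓ hC (by omega)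
  simpa [pathDepth, hv] using Nat.infDist_le_mRun h0 hq (by omega : (v : ℕ) < n - 1)

include hC hℓ in
theorem exists_pathDepth_eq (hn : 3 ≤ n) (h0 : 0 ∈ pathNeighbors (C + Cᵀ) ℓ) :
    ∃ i w, pathDepth (pathNeighbors (C + Cᵀ) ℓ) ℓ i =
      (mRun {i | i < n - 1 ∧ i ∉ pathNeighbors (C + Cᵀ) ℓ} + 1) / 2 + 1 ∧
      0 < (C + Cᵀ) i w ∧ w ≠ ℓ := by
  obtain ⟨v, hv, hvd⟩ := Nat.exists_mRun_le_infDist (q := n - 1) (by omega) ⟨0, h0⟩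
  have hw : ∃ w : ℕ, w < n - 1 ∧ Nat.dist v w = 1 := by
    rcases Nat.eq_zero_or_pos v with rfl | hv0
    · exact ⟨1, by omega, rfl⟩
    · exact ⟨v - 1, by omega, by unfold Nat.dist; omega⟩
  obtain ⟨w, hwn, hvw⟩ := hw
  refine ⟨⟨v, by omega⟩, ⟨w, by omega⟩, le_antisymm (pathDepth_le hℓ hC h0 _) ?_,
    (hC.add_transpose_apply_pos_iff (by simp; omega) (by simp; omega)).2 hvw,
    mk_ne_of_add_one_lt hℓ (by omega)⟩
  simpa [pathDepth, mk_ne_of_add_one_lt hℓ (by omega : v + 1 < n)] using hvd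

end PathDepth

end CompanionGraph

/-- For `A ∈ PSC_n^{1,1}` with `n ≥ 4`, letting `V₁` be the set of column
indices `i` of the last row (excluding the last) with `a_{n,i} = 0`, we have
`exp(A) = 2(⌊(m(V₁)+1)/2⌋ + 1)`. (Indices are 0-based here.) -/
theorem exp_PSC_one_one {n : ℕ} (hn : 4 ≤ n)
    (C A : Matrix (Fin n) (Fin n) ℝ) (hC : IsCompanion C)
    (h1 : C ⟨n - 1, by omega⟩ ⟨0, by omega⟩ = 1)
    (h2 : C ⟨n - 1, by omega⟩ ⟨n - 1, by omega⟩ = 1)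
    (hA : A = C + C.transpose) :
    ExpIs A (2 * ((mRun {i : ℕ | ∃ h : i < n, i + 1 < n ∧
      A ⟨n - 1, by omega⟩ ⟨i, h⟩ = 0} + 1) / 2 + 1)) := by
  subst hA
  set ℓ : Fin n := ⟨n - 1, by omega⟩
  have hℓ : (ℓ : ℕ) + 1 = n := by simp only [ℓ]; omega
  have hloop : 0 < (C + C.transpose) ℓ ℓ := by
    simp only [Matrix.add_apply, Matrix.transpose_apply, h2]
    norm_num
  have h0 : 0 ∈ pathNeighbors (C + C.transpose) ℓ :=
    ⟨by omega, by omega, add_pos_of_pos_of_nonneg (h1 ▸ one_pos) (hC.nonneg _ _)⟩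
  rw [setOf_apply_eq_zero_eq_notMem_pathNeighbors (hC.add_transpose_nonneg ℓ)]
  obtain ⟨i, w, hi, hiw, hw⟩ := exists_pathDepth_eq hℓ hC (by omega) h0
  exact Matrix.isLeast_pow_pos_of_depth hC.add_transpose_nonneg C.isSymm_add_transpose_self
    (fun _ ↦ pathDepth_eq_zero_iff) (fun _ _ ↦ pathDepth_le_pathDepth_add_one hℓ hC)
    (fun _ ↦ exists_pathDepth_add_one_eq hℓ hC) (fun _ _ ↦ cast_val_eq_add_one hℓ hC) hloop
    (pathDepth_le hℓ hC h0) hi hiw hw
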